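/- For 0 < q < 1, b > 0, μ > -1 and α > 0, the right-sided Riemann–Liouville q-fractional integral of the function x ↦ b^μ (qx/b;q)_μ equals (Γ_q(μ+1)/Γ_q(μ+α+1)) b^{α+μ} (qx/b;q)_{μ+α} for x ∈ A_{q,b}. -/

import Mathlib

open Filter

noncomputable section

namespace QFrac

variable (q : ℝ)

/-- infinite q-shifted factorial `(z;q)_∞` -/
def pochInf (z : ℝ) : ℝ := ∏' n : ℕ, (1 - z * q ^ n)

/-- generalized q-shifted factorial `(z;q)_ν = (z;q)_∞ / (z q^ν;q)_∞` -/
def poch (z ν : ℝ) : ℝ := pochInf q z / pochInf q (z * q ^ ν)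

/-- finite q-shifted factorial `(z;q)_k` -/
def pochN (z : ℝ) (k : ℕ) : ℝ := ∏ i ∈ Finset.range k, (1 - z * q ^ i)

/-- q-Gamma function -/
def qGamma (α : ℝ) : ℝ := pochInf q q / pochInf q (q ^ α) * (1 - q) ^ (1 - α)

/-- Jackson q-integral `∫_0^a f(t) d_q t` -/
def jackson (a : ℝ) (f : ℝ → ℝ) : ℝ := (1 - q) * a * ∑' n : ℕ, q ^ n * f (a * q ^ n)

/-- Jackson q-integral `∫_c^b f(t) d_q t` -/
def jacksonI (c b : ℝ) (f : ℝ → ℝ) : ℝ := jackson q b f - jackson q c f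

/-- left-sided Riemann–Liouville q-fractional integral `I^α_{q,0^+}` -/
def Ileft (α : ℝ) (f : ℝ → ℝ) (x : ℝ) : ℝ :=
  x ^ (α - 1) / qGamma q α * jackson q x (fun t => poch q (q * t / x) (α - 1) * f t)

/-- right-sided Riemann–Liouville q-fractional integral `I^α_{q,b^-}` -/
def Iright (b α : ℝ) (f : ℝ → ℝ) (x : ℝ) : ℝ :=
  (qGamma q α)⁻¹ *
    jacksonI q (q * x) b (fun t => t ^ (α - 1) * poch q (q * x / t) (α - 1) * f t)

/-- Jackson q-derivative -/
def Dq (f : ℝ → ℝ) (x : ℝ) : ℝ := (f x - f (q * x)) / ((1 - q) * x)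

/-- Jackson `q⁻¹`-derivative -/
def Dqinv (f : ℝ → ℝ) (x : ℝ) : ℝ := (f x - f (x / q)) / ((1 - q⁻¹) * x)

/-- left-sided Caputo q-fractional derivative of order `α ∈ (0,1)` -/
def CDleft (α : ℝ) (f : ℝ → ℝ) : ℝ → ℝ := Ileft q (1 - α) (Dq q f)

/-- left-sided Riemann–Liouville q-fractional derivative of order `α ∈ (0,1)` -/
def DRLleft (α : ℝ) (f : ℝ → ℝ) : ℝ → ℝ := Dq q (Ileft q (1 - α) f)

/-- right-sided Riemann–Liouville q-fractional derivative of order `α ∈ (0,1)` -/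
def DRLright (b α : ℝ) (f : ℝ → ℝ) (x : ℝ) : ℝ :=
  (-1 / q) * Dqinv q (fun t => Iright q b (1 - α) f t) x

/-- right-sided Caputo q-fractional derivative of order `α ∈ (0,1)` -/
def CDright (b α : ℝ) (f : ℝ → ℝ) (x : ℝ) : ℝ :=
  (-1 / q) * Iright q b (1 - α) (Dqinv q f) x

/-- `f ∈ L¹_q(A^*_{q,a})` -/
def MemL1 (a : ℝ) (f : ℝ → ℝ) : Prop := Summable (fun n : ℕ => q ^ n * |f (a * q ^ n)|)

/-- `f ∈ L²_q(A^*_{q,a})` -/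
def MemL2 (a : ℝ) (f : ℝ → ℝ) : Prop := Summable (fun n : ℕ => q ^ n * (f (a * q ^ n)) ^ 2)

/-- the `L²_q` norm -/
def norm2 (a : ℝ) (f : ℝ → ℝ) : ℝ := Real.sqrt (jackson q a (fun t => (f t) ^ 2))

/-- `f` is q-regular at zero (its value at `0` is the limit along the q-grid) -/
def qRegular (a : ℝ) (f : ℝ → ℝ) : Prop :=
  Tendsto (fun n : ℕ => f (a * q ^ n)) atTop (nhds (f 0))

/-- the limit at zero along the q-grid exists -/
def qRegular' (a : ℝ) (f : ℝ → ℝ) : Prop :=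
  ∃ L : ℝ, Tendsto (fun n : ℕ => f (a * q ^ n)) atTop (nhds L)

/-- sup norm on `A^*_{q,a}` -/
def supNorm (a : ℝ) (f : ℝ → ℝ) : ℝ := max (⨆ n : ℕ, |f (a * q ^ n)|) |f 0|

/-- bounded q-variation part of q-absolute continuity -/
def qACvar (a : ℝ) (f : ℝ → ℝ) : Prop :=
  ∃ K : ℝ, ∀ m N : ℕ,
    ∑ j ∈ Finset.range N, |f (a * q ^ (m + j)) - f (a * q ^ (m + j + 1))| ≤ K

/-- q-absolute continuity on `A^*_{q,a}` -/
def qAC (a : ℝ) (f : ℝ → ℝ) : Prop := qRegular q a f ∧ qACvar q a f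

/-- little q-Jacobi polynomial `p_n(x; q^A, q^B | q)` -/
def littleJacobi (n : ℕ) (A B x : ℝ) : ℝ :=
  ∑ k ∈ Finset.range (n + 1),
    pochN q (q ^ (-(n : ℝ))) k * pochN q (q ^ (A + B + (n : ℝ) + 1)) k /
      (pochN q (q ^ (A + 1)) k * pochN q q k) * (q * x) ^ k

end QFrac

/-!
On the grid `x = b qⁿ` both Jackson sums in `I^α_{q,b⁻}` collapse: the kernel `(qx/t;q)_{α-1}`
contains a vanishing factor `1 - (qx/t) qʲ` at every lower node `t = qx qᵏ` and at every upper node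
`t = b qᵏ` with `k > n`. Writing `(q^{m+1};q)_ν = (q^{ν+1};q)_m / (q;q)_m · (q;q)_ν`, the remaining
finite sum is the q-Chu–Vandermonde sum `∑ₖ cᵏ (d;q)_k (c;q)_{n-k} [n k]_q = (cd;q)_n` with
`c = q^α`, `d = q^{μ+1}`, and the constants combine through `(q;q)_ν = Γ_q(ν+1) (1-q)^ν`.
-/

namespace QFrac

open Finset

variable {q : ℝ}

theorem multipliable_one_sub_mul_pow (hq : |q| < 1) (z : ℝ) :
    Multipliable fun n : ℕ => 1 - z * q ^ n := by
  simpa [sub_eq_add_neg] using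
    Real.multipliable_one_add_of_summable ((summable_geometric_of_abs_lt_one hq).mul_left (-z))

theorem pochN_succ (z : ℝ) (k : ℕ) : pochN q z (k + 1) = pochN q z k * (1 - z * q ^ k) :=
  prod_range_succ _ _

theorem pochInf_eq_pochN_mul (hq : |q| < 1) (z : ℝ) (k : ℕ) :
    pochInf q z = pochN q z k * pochInf q (z * q ^ k) := by
  have htail : (fun n : ℕ => 1 - z * q ^ (n + k)) = fun n => 1 - z * q ^ k * q ^ n := by
    ext n; ring
  have hmul : Multipliable fun n : ℕ => 1 - z * q ^ (n + k) := by
    rw [htail]; exact multipliable_one_sub_mul_pow hq _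
  have := Multipliable.prod_mul_tprod_nat_mul' (f := fun n : ℕ => 1 - z * q ^ n) (k := k) hmul
  rw [htail] at this
  exact this.symm

theorem pochInf_eq_zero {z : ℝ} {i : ℕ} (h : z * q ^ i = 1) : pochInf q z = 0 :=
  tprod_of_exists_eq_zero ⟨i, by rw [h, sub_self]⟩

theorem poch_eq_zero {z : ℝ} {i : ℕ} (h : z * q ^ i = 1) (ν : ℝ) : poch q z ν = 0 := by
  rw [poch, pochInf_eq_zero h, zero_div]

theorem one_sub_mul_pow_pos (hq0 : 0 ≤ q) (hq1 : q ≤ 1) {z : ℝ} (hz : z < 1) (n : ℕ) :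
    0 < 1 - z * q ^ n := by
  have h0 : 0 ≤ q ^ n := pow_nonneg hq0 n
  have h1 : q ^ n ≤ 1 := pow_le_one₀ hq0 hq1
  rcases le_or_gt z 0 with hz0 | hz0 <;> nlinarith

theorem pochN_pos (hq0 : 0 ≤ q) (hq1 : q ≤ 1) {z : ℝ} (hz : z < 1) (k : ℕ) : 0 < pochN q z k :=
  prod_pos fun i _ => one_sub_mul_pow_pos hq0 hq1 hz i

theorem pochInf_pos (hq0 : 0 ≤ q) (hq1 : q < 1) {z : ℝ} (hz : z < 1) : 0 < pochInf q z := by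
  have hsum : Summable fun n : ℕ => Real.log (1 + -z * q ^ n) :=
    Real.summable_log_one_add_of_summable ((summable_geometric_of_lt_one hq0 hq1).mul_left (-z))
  simp only [neg_mul, ← sub_eq_add_neg] at hsum
  rw [pochInf, ← Real.rexp_tsum_eq_tprod (one_sub_mul_pow_pos hq0 hq1.le hz) hsum]
  exact Real.exp_pos _

theorem poch_mul_pow (hq : |q| < 1) {z ν : ℝ} {m : ℕ} (hz : pochN q z m ≠ 0)
    (hzν : pochN q (z * q ^ ν) m ≠ 0) :
    poch q (z * q ^ m) ν = pochN q (z * q ^ ν) m / pochN q z m * poch q z ν := by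
  rw [poch, poch, pochInf_eq_pochN_mul hq z m, pochInf_eq_pochN_mul hq (z * q ^ ν) m,
    mul_right_comm z]
  field_simp

theorem poch_pow_succ (hq0 : 0 < q) (hq1 : q < 1) {ν : ℝ} (hν : -1 < ν) (m : ℕ) :
    poch q (q ^ (m + 1)) ν = pochN q (q ^ (ν + 1)) m / pochN q q m * poch q q ν := by
  have hq : |q| < 1 := by rw [abs_of_pos hq0]; exact hq1
  have hqν : q * q ^ ν = q ^ (ν + 1) := by rw [Real.rpow_add_one hq0.ne', mul_comm]
  have hpos := pochN_pos hq0.le hq1.le (Real.rpow_lt_one hq0.le hq1 (by linarith : 0 < ν + 1)) m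
  rw [pow_succ', poch_mul_pow hq (pochN_pos hq0.le hq1.le hq1 m).ne' (hqν ▸ hpos.ne'), hqν]

theorem qGamma_pos (hq0 : 0 < q) (hq1 : q < 1) {s : ℝ} (hs : 0 < s) : 0 < qGamma q s := by
  unfold qGamma
  have := pochInf_pos hq0.le hq1 hq1
  have := pochInf_pos hq0.le hq1 (Real.rpow_lt_one hq0.le hq1 hs)
  have := Real.rpow_pos_of_pos (sub_pos.2 hq1) (1 - s)
  positivity

theorem poch_self_eq_qGamma (hq0 : 0 < q) (hq1 : q < 1) (ν : ℝ) :
    poch q q ν = qGamma q (ν + 1) * (1 - q) ^ ν := by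
  rw [poch, qGamma, show 1 - (ν + 1) = -ν by ring, Real.rpow_neg (sub_pos.2 hq1).le,
    Real.rpow_add_one hq0.ne', mul_comm (q ^ ν)]
  have := Real.rpow_pos_of_pos (sub_pos.2 hq1) ν
  field_simp

/-- The Gaussian binomial coefficient `[n k]_q`, defined by the q-Pascal rule. -/
def qBinom (q : ℝ) : ℕ → ℕ → ℝ
  | _, 0 => 1
  | 0, _ + 1 => 0
  | n + 1, k + 1 => qBinom q n (k + 1) + q ^ (n - k) * qBinom q n k

@[simp]
theorem qBinom_zero_right (n : ℕ) : qBinom q n 0 = 1 := by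
  cases n <;> rfl

theorem qBinom_succ_succ (n k : ℕ) :
    qBinom q (n + 1) (k + 1) = qBinom q n (k + 1) + q ^ (n - k) * qBinom q n k := rfl

theorem qBinom_eq_zero_of_lt : ∀ {n k : ℕ}, n < k → qBinom q n k = 0
  | 0, _ + 1, _ => rfl
  | n + 1, k + 1, h => by
    rw [qBinom_succ_succ, qBinom_eq_zero_of_lt (by omega), qBinom_eq_zero_of_lt (by omega),
      mul_zero, add_zero]

theorem qBinom_self : ∀ n : ℕ, qBinom q n n = 1
  | 0 => rfl
  | n + 1 => by
    rw [qBinom_succ_succ, qBinom_eq_zero_of_lt (Nat.lt_succ_self n), qBinom_self n, Nat.sub_self,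
      pow_zero, mul_one, zero_add]

theorem qBinom_mul_pochN : ∀ {n k : ℕ}, k ≤ n →
    qBinom q n k * (pochN q q k * pochN q q (n - k)) = pochN q q n
  | n, 0, _ => by simp [pochN]
  | n + 1, k + 1, h => by
    rw [qBinom_succ_succ, Nat.add_sub_add_right]
    rcases Nat.lt_or_eq_of_le (Nat.le_of_succ_le_succ h) with hk | rfl
    · obtain ⟨j, rfl⟩ := Nat.exists_eq_add_of_lt hk
      have h₁ := qBinom_mul_pochN (n := k + j + 1) (k := k + 1) (by omega)
      have h₂ := qBinom_mul_pochN (n := k + j + 1) (k := k) (by omega)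
      rw [show k + j + 1 - (k + 1) = j by omega] at h₁
      rw [show k + j + 1 - k = j + 1 by omega] at h₂ ⊢
      simp only [pochN_succ] at h₁ h₂ ⊢
      linear_combination (1 - q * q ^ j) * h₁ + q ^ (j + 1) * (1 - q * q ^ k) * h₂
    · rw [qBinom_eq_zero_of_lt (Nat.lt_succ_self k), qBinom_self, Nat.sub_self, pochN_succ]
      simp [pochN]

theorem pochN_mul_eq_sum_qBinom (c d : ℝ) (n : ℕ) :
    pochN q (c * d) n =
      ∑ k ∈ range (n + 1), c ^ k * pochN q d k * pochN q c (n - k) * qBinom q n k := by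
  induction n with
  | zero => simp [pochN]
  | succ n ih =>
    have hlast :
        ∑ k ∈ range (n + 1 + 1), c ^ k * pochN q d k * pochN q c (n + 1 - k) * qBinom q n k =
          ∑ k ∈ range (n + 1),
            c ^ k * pochN q d k * (pochN q c (n - k) * (1 - c * q ^ (n - k))) * qBinom q n k := by
      rw [sum_range_succ, qBinom_eq_zero_of_lt (Nat.lt_succ_self n), mul_zero, add_zero]
      refine sum_congr rfl fun k hk => ?_
      rw [show n + 1 - k = n - k + 1 by have := mem_range.1 hk; omega, pochN_succ]
    calc pochN q (c * d) (n + 1)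
        = ∑ k ∈ range (n + 1), (1 - c * d * q ^ n) *
            (c ^ k * pochN q d k * pochN q c (n - k) * qBinom q n k) := by
          rw [pochN_succ, ih, mul_comm, mul_sum]
      _ = ∑ k ∈ range (n + 1),
            (c ^ k * pochN q d k * (pochN q c (n - k) * (1 - c * q ^ (n - k))) * qBinom q n k +
              c ^ (k + 1) * pochN q d (k + 1) * pochN q c (n - k) *
                (q ^ (n - k) * qBinom q n k)) := by
          refine sum_congr rfl fun k hk => ?_
          have hpow : q ^ (n - k) * q ^ k = q ^ n := by
            rw [← pow_add, Nat.sub_add_cancel (Nat.lt_succ_iff.1 (mem_range.1 hk))]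
          rw [pochN_succ]
          linear_combination
            (c ^ (k + 1) * d * pochN q d k * pochN q c (n - k) * qBinom q n k) * hpow
      _ = ∑ k ∈ range (n + 1 + 1),
            c ^ k * pochN q d k * pochN q c (n + 1 - k) * qBinom q (n + 1) k := by
          rw [sum_add_distrib, ← hlast, sum_range_succ', sum_range_succ' _ (n + 1)]
          simp only [qBinom_succ_succ, qBinom_zero_right, Nat.add_sub_add_right, mul_add,
            sum_add_distrib]
          ring

theorem sum_pochN_div_pochN (hq0 : 0 ≤ q) (hq1 : q < 1) (c d : ℝ) (n : ℕ) :
    ∑ k ∈ range (n + 1), c ^ k * pochN q d k * pochN q c (n - k) /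
        (pochN q q k * pochN q q (n - k)) = pochN q (c * d) n / pochN q q n := by
  have hP : ∀ j, pochN q q j ≠ 0 := fun j => (pochN_pos hq0 hq1.le hq1 j).ne'
  rw [eq_div_iff (hP n), pochN_mul_eq_sum_qBinom, sum_mul]
  refine sum_congr rfl fun k hk => ?_
  rw [← qBinom_mul_pochN (Nat.lt_succ_iff.1 (mem_range.1 hk))]
  have := hP k
  have := hP (n - k)
  field_simp

theorem sum_rpow_mul_poch_mul_poch (hq0 : 0 < q) (hq1 : q < 1) {α μ : ℝ} (hα : 0 < α)
    (hμ : -1 < μ) (n : ℕ) :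
    (1 - q) * ∑ k ∈ range (n + 1),
        (q ^ k) ^ α * poch q (q ^ (n - k + 1)) (α - 1) * poch q (q ^ (k + 1)) μ =
      qGamma q α * qGamma q (μ + 1) / qGamma q (μ + α + 1) * poch q (q ^ (n + 1)) (μ + α) := by
  have hsum : ∑ k ∈ range (n + 1),
        (q ^ k) ^ α * poch q (q ^ (n - k + 1)) (α - 1) * poch q (q ^ (k + 1)) μ =
      poch q q (α - 1) * poch q q μ * ∑ k ∈ range (n + 1), (q ^ α) ^ k * pochN q (q ^ (μ + 1)) k *
        pochN q (q ^ α) (n - k) / (pochN q q k * pochN q q (n - k)) := by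
    rw [mul_sum]
    refine sum_congr rfl fun k _ => ?_
    rw [poch_pow_succ hq0 hq1 (by linarith), poch_pow_succ hq0 hq1 hμ, sub_add_cancel,
      ← Real.rpow_pow_comm hq0.le]
    ring
  have hcd : q ^ α * q ^ (μ + 1) = q ^ (μ + α + 1) := by
    rw [← Real.rpow_add hq0]; ring_nf
  have hq' : 0 < 1 - q := sub_pos.2 hq1
  have hexp : (1 - q) * (1 - q) ^ (α - 1) * (1 - q) ^ μ = (1 - q) ^ (μ + α) := by
    rw [mul_comm (1 - q), ← Real.rpow_add_one hq'.ne', ← Real.rpow_add hq']; ring_nf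
  have hΓ := (qGamma_pos hq0 hq1 (show 0 < μ + α + 1 by linarith)).ne'
  rw [hsum, sum_pochN_div_pochN hq0.le hq1, hcd, poch_pow_succ hq0 hq1 (by linarith)]
  simp only [poch_self_eq_qGamma hq0 hq1, sub_add_cancel]
  rw [← hexp]
  field_simp

theorem jackson_eq_zero {a : ℝ} {f : ℝ → ℝ} (hf : ∀ k : ℕ, f (a * q ^ k) = 0) :
    jackson q a f = 0 := by
  simp [jackson, hf]

theorem Iright_mul_pow (hq : q ≠ 0) {b : ℝ} (hb : b ≠ 0) (α : ℝ) (f : ℝ → ℝ) (n : ℕ) :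
    Iright q b α f (b * q ^ n) = (qGamma q α)⁻¹ * ((1 - q) * b * ∑ k ∈ range (n + 1),
      q ^ k * ((b * q ^ k) ^ (α - 1) * poch q (q ^ (n - k + 1)) (α - 1) * f (b * q ^ k))) := by
  have hx : q * (b * q ^ n) ≠ 0 := by positivity
  have hlower : jackson q (q * (b * q ^ n))
      (fun t => t ^ (α - 1) * poch q (q * (b * q ^ n) / t) (α - 1) * f t) = 0 :=
    jackson_eq_zero fun k => by
      rw [poch_eq_zero (i := k) (by field_simp), mul_zero, zero_mul]
  have hout : ∀ k ∉ range (n + 1),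
      q ^ k * ((b * q ^ k) ^ (α - 1) * poch q (q * (b * q ^ n) / (b * q ^ k)) (α - 1) *
        f (b * q ^ k)) = 0 := by
    intro k hk
    obtain ⟨j, rfl⟩ := Nat.exists_eq_add_of_le (not_lt.1 (mt mem_range.2 hk))
    have hone : q * (b * q ^ n) / (b * q ^ (n + 1 + j)) * q ^ (n + 1 + j - (n + 1)) = 1 := by
      rw [Nat.add_sub_cancel_left]
      field_simp
      ring
    rw [poch_eq_zero hone, mul_zero, zero_mul, mul_zero]
  rw [Iright, jacksonI, hlower, sub_zero, jackson, tsum_eq_sum hout]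
  congr 2
  refine sum_congr rfl fun k hk => ?_
  obtain ⟨j, rfl⟩ := Nat.exists_eq_add_of_le (Nat.lt_succ_iff.1 (mem_range.1 hk))
  have hgrid : q * (b * q ^ (k + j)) / (b * q ^ k) = q ^ (k + j - k + 1) := by
    rw [Nat.add_sub_cancel_left]
    field_simp
    ring
  rw [hgrid]

end QFrac

/-- right-sided q-fractional integral of `b^μ (qx/b;q)_μ`. -/
theorem stmt1 (q b α μ : ℝ) (hq : 0 < q) (hq1 : q < 1) (hb : 0 < b)
    (hα : 0 < α) (hμ : -1 < μ) (n : ℕ) :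
    QFrac.Iright q b α (fun t => b ^ μ * QFrac.poch q (q * t / b) μ) (b * q ^ n) =
      QFrac.qGamma q (μ + 1) / QFrac.qGamma q (μ + α + 1) * b ^ (α + μ) *
        QFrac.poch q (q * (b * q ^ n) / b) (μ + α) := by
  have hgrid : ∀ k : ℕ, q * (b * q ^ k) / b = q ^ (k + 1) := fun k => by
    field_simp; ring
  have hterm : ∀ k : ℕ, q ^ k * ((b * q ^ k) ^ (α - 1) * QFrac.poch q (q ^ (n - k + 1)) (α - 1) *
      (b ^ μ * QFrac.poch q (q ^ (k + 1)) μ)) = b ^ (α - 1) * b ^ μ * ((q ^ k) ^ α *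
        QFrac.poch q (q ^ (n - k + 1)) (α - 1) * QFrac.poch q (q ^ (k + 1)) μ) := fun k => by
    rw [Real.mul_rpow hb.le (by positivity), Real.rpow_sub_one (pow_ne_zero k hq.ne') α]
    field_simp
  have hb' : b * (b ^ (α - 1) * b ^ μ) = b ^ (α + μ) := by
    rw [show α + μ = 1 + (α - 1) + μ by ring, Real.rpow_add hb, Real.rpow_add hb, Real.rpow_one,
      mul_assoc]
  have hΓ := (QFrac.qGamma_pos hq hq1 hα).ne'
  simp only [QFrac.Iright_mul_pow hq.ne' hb.ne', hgrid, hterm, ← Finset.mul_sum]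
  calc _ = (QFrac.qGamma q α)⁻¹ * (b * (b ^ (α - 1) * b ^ μ)) * ((1 - q) *
        ∑ k ∈ Finset.range (n + 1), (q ^ k) ^ α * QFrac.poch q (q ^ (n - k + 1)) (α - 1) *
          QFrac.poch q (q ^ (k + 1)) μ) := by ring
    _ = _ := by
      rw [QFrac.sum_rpow_mul_poch_mul_poch hq hq1 hα hμ, hb']
      field_simp
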